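/- Let m be an odd positive integer and a ∈ ℂ. Consider the linear differential operator on the space P_m[t] of complex polynomials of degree at most m given by D := (−mt + t²(d/dt) − (d/dt))∘(m − 2t(d/dt)) + (1+2a)(mt − t²(d/dt) − (d/dt)), and set k₀ := (m−1−2a)/4. Then D has a nonzero kernel on P_m[t] if and only if k₀ ∈ ℕ and 2k₀ ≤ m−1; and in that case the kernel of D on P_m[t] is two-dimensional, spanned by the polynomials q₁(t) := ∑_{k=0}^{k₀} [(−m/2)_k (−k₀)_k / (k! (k₀+1−m/2)_k)] t^{2k} and q₂(t) := ∑_{k=0}^{k₀} [(−m/2)_k (−k₀)_k / (k! (k₀+1−m/2)_k)] t^{m−2k}. -/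

import Mathlib

noncomputable section

open Polynomial

/-- The second-order differential operator
`D = (-mt + t²(d/dt) - d/dt) ∘ (m - 2t(d/dt)) + (1+2a)(mt - t²(d/dt) - d/dt)`
acting on polynomials in `t`. -/
def Dop (m : ℕ) (a : ℂ) (q : ℂ[X]) : ℂ[X] :=
  (-(m : ℂ)) • (X * (((m : ℂ) • q) - 2 • (X * derivative q))) +
    X ^ 2 * derivative (((m : ℂ) • q) - 2 • (X * derivative q)) -
    derivative (((m : ℂ) • q) - 2 • (X * derivative q)) +
    (1 + 2 * a) • (((m : ℂ) • (X * q)) - X ^ 2 * derivative q - derivative q)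

/-- The coefficient `(-m/2)_k (-k₀)_k / (k! (k₀+1-m/2)_k)` (Pochhammer symbols). -/
def hgCoeff (m k₀ k : ℕ) : ℂ :=
  (ascPochhammer ℂ k).eval (-(m : ℂ) / 2) * (ascPochhammer ℂ k).eval (-(k₀ : ℂ)) /
    ((k.factorial : ℂ) * (ascPochhammer ℂ k).eval ((k₀ : ℂ) + 1 - (m : ℂ) / 2))

/-- `q₁(t) = ∑_{k=0}^{k₀} (-m/2)_k (-k₀)_k / (k! (k₀+1-m/2)_k) t^{2k}`. -/
def q₁ (m k₀ : ℕ) : ℂ[X] :=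
  ∑ k ∈ Finset.range (k₀ + 1), C (hgCoeff m k₀ k) * X ^ (2 * k)

/-- `q₂(t) = ∑_{k=0}^{k₀} (-m/2)_k (-k₀)_k / (k! (k₀+1-m/2)_k) t^{m-2k}`. -/
def q₂ (m k₀ : ℕ) : ℂ[X] :=
  ∑ k ∈ Finset.range (k₀ + 1), C (hgCoeff m k₀ k) * X ^ (m - 2 * k)

/-!
On coefficients, `Dop` sends `t^n` to `raiseCoeff n • t^(n+1) + lowerCoeff n • t^(n-1)`, so the
kernel equation is a two-term recurrence that splits into an even and an odd chain. The reflection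
`q ↦ t^m q(1/t)` anticommutes with `Dop` and, `m` being odd, exchanges the two chains, so one
chain suffices in each case. If `k₀ = (m-1-2a)/4` is a natural number with `2k₀ < m`, the even
chain started at `q(0) = 1` is the terminating hypergeometric series `q₁` and its reflection is
`q₂`; a kernel element minus the matching combination of `q₁, q₂` has vanishing constant and top
coefficients, hence vanishes, because the lowering coefficients in positive even degree are
nonzero. Otherwise the lowering coefficients in odd degree `≤ m` are nonzero, which kills the odd
chain of every kernel element and, by reflection, its even chain.
-/

def raiseCoeff (m : ℕ) (a : ℂ) (n : ℕ) : ℂ := ((m : ℂ) - n) * (2 * n - m + 1 + 2 * a)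

def lowerCoeff (m : ℕ) (a : ℂ) (n : ℕ) : ℂ := (n : ℂ) * (2 * n - m - 1 - 2 * a)

section Coefficients

variable (m : ℕ) (a : ℂ) (q : ℂ[X])

theorem coeff_Dop_zero : (Dop m a q).coeff 0 = lowerCoeff m a 1 * q.coeff 1 := by
  simp only [Dop, nsmul_eq_mul, Nat.cast_ofNat, neg_smul, derivative_sub, map_smul, derivative_mul,
    derivative_ofNat, zero_mul, derivative_X, one_mul, zero_add, coeff_add, coeff_sub, coeff_neg,
    coeff_smul, mul_coeff_zero, coeff_X_zero, smul_eq_mul, coeff_ofNat_mul, coeff_derivative,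
    CharP.cast_eq_zero, mul_one, mul_zero, sub_zero, neg_zero, coeff_X_pow, OfNat.zero_ne_ofNat,
    if_false, Nat.reduceAdd, Nat.cast_one, add_zero, zero_sub, lowerCoeff]
  ring

theorem coeff_Dop_succ (n : ℕ) :
    (Dop m a q).coeff (n + 1) =
      raiseCoeff m a n * q.coeff n + lowerCoeff m a (n + 2) * q.coeff (n + 2) := by
  have coeff_X_mul_derivative (p : ℂ[X]) (d : ℕ) : (X * derivative p).coeff d = d * p.coeff d := by
    rcases d with _ | d
    · simp [mul_coeff_zero]
    · rw [coeff_X_mul, coeff_derivative]; push_cast; ring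
  rcases n with _ | n <;>
  simp only [Dop, nsmul_eq_mul, Nat.cast_ofNat, neg_smul, derivative_sub, map_smul, derivative_mul,
    derivative_ofNat, zero_mul, derivative_X, one_mul, zero_add, coeff_add, coeff_sub, coeff_neg,
    coeff_smul, coeff_X_mul, smul_eq_mul, coeff_ofNat_mul, coeff_X_mul_derivative, Nat.cast_add,
    Nat.cast_one, CharP.cast_eq_zero, coeff_X_pow_mul', coeff_derivative, Nat.reduceAdd,
    le_add_iff_nonneg_left, zero_le, Nat.not_ofNat_le_one, if_true, if_false, Nat.reduceSubDiff,
    mul_zero, sub_zero, add_zero, zero_sub, raiseCoeff, lowerCoeff] <;>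
  ring

end Coefficients

def dopLinearMap (m : ℕ) (a : ℂ) : ℂ[X] →ₗ[ℂ] ℂ[X] where
  toFun := Dop m a
  map_add' p q := by
    ext (_ | n) <;> simp only [coeff_Dop_zero, coeff_Dop_succ, coeff_add] <;> ring
  map_smul' c q := by
    ext (_ | n) <;> simp only [coeff_Dop_zero, coeff_Dop_succ, coeff_smul, smul_eq_mul,
      RingHom.id_apply] <;> ring

def dopKernel (m : ℕ) (a : ℂ) : Submodule ℂ ℂ[X] :=
  degreeLE ℂ m ⊓ LinearMap.ker (dopLinearMap m a)

theorem coe_dopKernel (m : ℕ) (a : ℂ) :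
    (dopKernel m a : Set ℂ[X]) = {q : ℂ[X] | q.degree ≤ (m : WithBot ℕ) ∧ Dop m a q = 0} := by
  ext q
  simp [dopKernel, mem_degreeLE, dopLinearMap]

theorem mem_dopKernel {m : ℕ} {a : ℂ} {q : ℂ[X]} :
    q ∈ dopKernel m a ↔ q.natDegree ≤ m ∧ Dop m a q = 0 := by
  rw [← SetLike.mem_coe, coe_dopKernel, Set.mem_ofPred_eq, natDegree_le_iff_degree_le]

theorem raiseCoeff_eq_neg_lowerCoeff {m n : ℕ} (a : ℂ) (h : n ≤ m) :
    raiseCoeff m a n = -lowerCoeff m a (m - n) := by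
  simp only [raiseCoeff, lowerCoeff, Nat.cast_sub h]
  ring

theorem raiseCoeff_self (m : ℕ) (a : ℂ) : raiseCoeff m a m = 0 := by
  simp [raiseCoeff]

theorem Dop_reflect {m : ℕ} (a : ℂ) {q : ℂ[X]} (hq : q.natDegree ≤ m) :
    Dop m a (reflect m q) = -reflect m (Dop m a q) := by
  have hlarge (n : ℕ) (hn : m < n) : q.coeff n = 0 := coeff_eq_zero_of_natDegree_lt (by omega)
  ext (_ | i)
  · rw [coeff_Dop_zero, coeff_neg, coeff_reflect, coeff_reflect, revAt_zero]
    rcases m with _ | m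
    · rw [revAt_eq_self_of_lt one_pos, coeff_Dop_zero, hlarge 1 one_pos]
      ring
    · rw [revAt_le (by omega), coeff_Dop_succ, hlarge (m + 2) (by omega),
        raiseCoeff_eq_neg_lowerCoeff a (by omega : m ≤ m + 1), Nat.add_sub_cancel_left,
        Nat.add_sub_cancel]
      ring
  · rw [coeff_Dop_succ, coeff_neg, coeff_reflect, coeff_reflect, coeff_reflect]
    rcases lt_trichotomy (i + 1) m with h | h | h
    · obtain ⟨n, rfl⟩ : ∃ n, m = i + 2 + n := ⟨m - (i + 2), by omega⟩
      rw [revAt_le (by omega), revAt_le (by omega), revAt_le (by omega),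
        show i + 2 + n - (i + 1) = n + 1 by omega, coeff_Dop_succ,
        show i + 2 + n - i = n + 2 by omega, show i + 2 + n - (i + 2) = n by omega,
        raiseCoeff_eq_neg_lowerCoeff a (by omega : i ≤ i + 2 + n),
        raiseCoeff_eq_neg_lowerCoeff a (by omega : n ≤ i + 2 + n),
        show i + 2 + n - i = n + 2 by omega, show i + 2 + n - n = i + 2 by omega]
      ring
    · subst h
      rw [revAt_le (by omega), revAt_le le_rfl, revAt_eq_self_of_lt (by omega),
        Nat.sub_self, coeff_Dop_zero, hlarge (i + 2) (by omega),
        raiseCoeff_eq_neg_lowerCoeff a (by omega : i ≤ i + 1), Nat.add_sub_cancel_left]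
      ring
    · rw [revAt_eq_self_of_lt h, revAt_eq_self_of_lt (by omega : m < i + 2), coeff_Dop_succ,
        hlarge (i + 2) (by omega)]
      rcases (Nat.lt_succ_iff.mp h).eq_or_lt with rfl | h'
      · rw [revAt_le le_rfl, raiseCoeff_self]
        ring
      · rw [revAt_eq_self_of_lt h', hlarge i h']
        ring

section Hypergeometric

variable {m : ℕ} (k₀ : ℕ)

theorem natCast_add_one_sub_half_ne_zero (hm : Odd m) (j : ℕ) :
    (k₀ : ℂ) + 1 - (m : ℂ) / 2 + j ≠ 0 := by
  intro h
  have h2 : ((2 * (k₀ + 1 + j) : ℕ) : ℂ) = m := by push_cast; linear_combination 2 * h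
  have := Nat.cast_injective h2
  obtain ⟨i, hi⟩ := hm
  omega

theorem hgCoeff_zero : hgCoeff m k₀ 0 = 1 := by
  simp [hgCoeff]

theorem hgCoeff_of_lt {k : ℕ} (hk : k₀ < k) : hgCoeff m k₀ k = 0 := by
  simp [hgCoeff, ascPochhammer_eval_neg_coe_nat_of_lt hk]

theorem hgCoeff_succ (hm : Odd m) (k : ℕ) :
    ((k : ℂ) + 1) * ((k₀ : ℂ) + 1 - (m : ℂ) / 2 + k) * hgCoeff m k₀ (k + 1) =
      ((k : ℂ) - (m : ℂ) / 2) * ((k : ℂ) - k₀) * hgCoeff m k₀ k := by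
  have hpoch : (ascPochhammer ℂ k).eval ((k₀ : ℂ) + 1 - (m : ℂ) / 2) ≠ 0 := by
    rw [Ne, ascPochhammer_eval_eq_zero_iff]
    rintro ⟨j, -, hj⟩
    exact natCast_add_one_sub_half_ne_zero k₀ hm j (by rw [hj]; ring)
  have hlast := natCast_add_one_sub_half_ne_zero k₀ hm k
  have hfact : (k.factorial : ℂ) ≠ 0 := Nat.cast_ne_zero.mpr k.factorial_ne_zero
  have hk : (k : ℂ) + 1 ≠ 0 := by norm_cast
  simp only [hgCoeff, ascPochhammer_succ_eval, Nat.factorial_succ, Nat.cast_mul, Nat.cast_succ]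
  generalize (ascPochhammer ℂ k).eval ((k₀ : ℂ) + 1 - (m : ℂ) / 2) = P at hpoch ⊢
  generalize (k₀ : ℂ) + 1 - (m : ℂ) / 2 + k = Y at hlast ⊢
  field_simp
  ring

end Hypergeometric

section Solutions

variable {m : ℕ} (k₀ : ℕ)

theorem coeff_q₁_two_mul (k : ℕ) : (q₁ m k₀).coeff (2 * k) = hgCoeff m k₀ k := by
  simp only [q₁, finsetSum_coeff, coeff_C_mul_X_pow, Nat.mul_left_cancel_iff two_pos,
    Finset.sum_ite_eq, Finset.mem_range]
  split_ifs with hk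
  · rfl
  · exact (hgCoeff_of_lt k₀ (by omega)).symm

theorem coeff_q₁_two_mul_add_one (k : ℕ) : (q₁ m k₀).coeff (2 * k + 1) = 0 := by
  simp only [q₁, finsetSum_coeff, coeff_C_mul_X_pow]
  exact Finset.sum_eq_zero fun j _ => if_neg (by omega)

theorem Dop_q₁ {a : ℂ} (hm : Odd m) (hk : ((m : ℂ) - 1 - 2 * a) / 4 = k₀) :
    Dop m a (q₁ m k₀) = 0 := by
  have ha : a = ((m : ℂ) - 1 - 4 * k₀) / 2 := by linear_combination -2 * hk
  ext (_ | n)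
  · rw [coeff_Dop_zero, coeff_zero, coeff_q₁_two_mul_add_one k₀ 0, mul_zero]
  · rw [coeff_Dop_succ, coeff_zero]
    obtain ⟨k, rfl | rfl⟩ := Nat.even_or_odd' n
    · rw [show 2 * k + 2 = 2 * (k + 1) by ring, coeff_q₁_two_mul, coeff_q₁_two_mul]
      -- `raiseCoeff (2k) = -8 (k - m/2) (k - k₀)`, `lowerCoeff (2k+2) = 8 (k+1) (k₀+1-m/2+k)`
      simp only [raiseCoeff, lowerCoeff, ha]
      push_cast
      linear_combination 8 * hgCoeff_succ k₀ hm k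
    · rw [show 2 * k + 1 + 2 = 2 * (k + 1) + 1 by ring, coeff_q₁_two_mul_add_one,
        coeff_q₁_two_mul_add_one]
      ring

theorem natDegree_q₁_le (h : 2 * k₀ ≤ m) : (q₁ m k₀).natDegree ≤ m :=
  natDegree_sum_le_of_forall_le _ _ fun k hk =>
    (natDegree_C_mul_X_pow_le _ _).trans (by simp at hk; omega)

theorem reflect_q₁ (h : 2 * k₀ ≤ m) : reflect m (q₁ m k₀) = q₂ m k₀ := by
  rw [q₁, q₂, ← AddMonoidHom.mk'_apply (reflect m) (fun f g => reflect_add f g m), map_sum]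
  refine Finset.sum_congr rfl fun k hk => ?_
  rw [AddMonoidHom.mk'_apply, reflect_C_mul_X_pow, revAt_le (by simp at hk; omega)]

theorem coeff_q₁_zero : (q₁ m k₀).coeff 0 = 1 := by
  rw [← Nat.mul_zero 2, coeff_q₁_two_mul, hgCoeff_zero]

theorem coeff_q₁_of_odd (hm : Odd m) : (q₁ m k₀).coeff m = 0 := by
  obtain ⟨j, rfl⟩ := hm
  exact coeff_q₁_two_mul_add_one k₀ j

theorem coeff_q₂_zero (hm : Odd m) (h : 2 * k₀ ≤ m) : (q₂ m k₀).coeff 0 = 0 := by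
  rw [← reflect_q₁ k₀ h, coeff_reflect, revAt_zero, coeff_q₁_of_odd k₀ hm]

theorem coeff_q₂_self (h : 2 * k₀ ≤ m) : (q₂ m k₀).coeff m = 1 := by
  rw [← reflect_q₁ k₀ h, coeff_reflect, revAt_le le_rfl, Nat.sub_self, coeff_q₁_zero]

end Solutions

section Kernel

variable {m : ℕ} {a : ℂ}

theorem lowerCoeff_eq_zero_iff {n : ℕ} :
    lowerCoeff m a n = 0 ↔ n = 0 ∨ (n : ℂ) + 2 * (((m : ℂ) - 1 - 2 * a) / 4) = m := by
  rw [lowerCoeff, mul_eq_zero, Nat.cast_eq_zero]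
  exact or_congr_right ⟨fun h => by linear_combination h / 2, fun h => by linear_combination 2 * h⟩

theorem lowerCoeff_ne_zero_of_odd (hm : Odd m)
    (hk : ¬∃ k₀ : ℕ, ((m : ℂ) - 1 - 2 * a) / 4 = (k₀ : ℂ) ∧ 2 * k₀ ≤ m - 1)
    {n : ℕ} (hn : Odd n) (hnm : n ≤ m) : lowerCoeff m a n ≠ 0 := by
  obtain ⟨j, rfl⟩ := hn
  rw [Ne, lowerCoeff_eq_zero_iff]
  rintro (h | h)
  · omega
  · obtain ⟨i, rfl⟩ := hm
    refine hk ⟨i - j, ?_, by omega⟩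
    push_cast [Nat.cast_sub (by omega : j ≤ i)] at h ⊢
    linear_combination h / 2

theorem lowerCoeff_ne_zero_of_even (hm : Odd m) {k₀ : ℕ}
    (hk : ((m : ℂ) - 1 - 2 * a) / 4 = k₀) {n : ℕ} (hn : Even n) (hn0 : n ≠ 0) :
    lowerCoeff m a n ≠ 0 := by
  rw [Ne, lowerCoeff_eq_zero_iff, hk, not_or]
  refine ⟨hn0, fun h => ?_⟩
  have : n + 2 * k₀ = m := by exact_mod_cast h
  obtain ⟨i, rfl⟩ := hn
  obtain ⟨j, rfl⟩ := hm
  omega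

theorem reflect_mem_dopKernel {q : ℂ[X]} (hq : q ∈ dopKernel m a) :
    reflect m q ∈ dopKernel m a := by
  rw [mem_dopKernel] at hq ⊢
  refine ⟨natDegree_reflect_le.trans (max_le le_rfl hq.1), ?_⟩
  rw [Dop_reflect a hq.1, hq.2, reflect_zero, neg_zero]

theorem coeff_add_two_mul_eq_zero_of_mem_dopKernel {q : ℂ[X]} (hq : q ∈ dopKernel m a) {n : ℕ}
    (h₀ : q.coeff n = 0) (hB : ∀ j, n + 2 * j + 2 ≤ m → lowerCoeff m a (n + 2 * j + 2) ≠ 0)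
    (j : ℕ) : q.coeff (n + 2 * j) = 0 := by
  rw [mem_dopKernel] at hq
  induction j with
  | zero => exact h₀
  | succ j ih =>
    have hrel := coeff_Dop_succ m a q (n + 2 * j)
    rw [hq.2, coeff_zero, ih, mul_zero, zero_add, eq_comm, mul_eq_zero] at hrel
    rw [show n + 2 * (j + 1) = n + 2 * j + 2 by ring]
    by_cases hjm : n + 2 * j + 2 ≤ m
    · exact hrel.resolve_left (hB j hjm)
    · exact coeff_eq_zero_of_natDegree_lt (by omega)

theorem eq_zero_of_coeff_reflect_eq_zero (hm : Odd m) {q : ℂ[X]} (hq : q.natDegree ≤ m)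
    {r : ℕ} (hr : r ≤ 1) (h : ∀ j, q.coeff (r + 2 * j) = 0)
    (h' : ∀ j, (reflect m q).coeff (r + 2 * j) = 0) : q = 0 := by
  ext n
  rw [coeff_zero]
  obtain ⟨i, rfl⟩ := hm
  by_cases hn : n ≤ 2 * i + 1
  · obtain ⟨j, hj | hj⟩ := Nat.even_or_odd' (n + r)
    · rw [show n = r + 2 * (j - r) by omega]
      exact h _
    · have := h' (i - j)
      rwa [coeff_reflect, revAt_le (by omega), show 2 * i + 1 - (r + 2 * (i - j)) = n by omega]
        at this
  · exact coeff_eq_zero_of_natDegree_lt (by omega)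

end Kernel

section Classification

variable {m : ℕ} {a : ℂ}

theorem eq_zero_of_mem_dopKernel (hm : Odd m)
    (hk : ¬∃ k₀ : ℕ, ((m : ℂ) - 1 - 2 * a) / 4 = (k₀ : ℂ) ∧ 2 * k₀ ≤ m - 1)
    {q : ℂ[X]} (hq : q ∈ dopKernel m a) : q = 0 := by
  have hodd {p : ℂ[X]} (hp : p ∈ dopKernel m a) (j : ℕ) : p.coeff (1 + 2 * j) = 0 := by
    have hone : lowerCoeff m a 1 * p.coeff 1 = 0 := by
      rw [← coeff_Dop_zero, (mem_dopKernel.mp hp).2, coeff_zero]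
    refine coeff_add_two_mul_eq_zero_of_mem_dopKernel hp
      ((mul_eq_zero.mp hone).resolve_left (lowerCoeff_ne_zero_of_odd hm hk odd_one hm.pos))
      (fun j hj => lowerCoeff_ne_zero_of_odd hm hk ⟨j + 1, by ring⟩ hj) j
  exact eq_zero_of_coeff_reflect_eq_zero hm (mem_dopKernel.mp hq).1 le_rfl (hodd hq)
    (hodd (reflect_mem_dopKernel hq))

variable {k₀ : ℕ}

theorem q₁_mem_dopKernel (hm : Odd m) (hk : ((m : ℂ) - 1 - 2 * a) / 4 = k₀) (h : 2 * k₀ ≤ m) :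
    q₁ m k₀ ∈ dopKernel m a :=
  mem_dopKernel.mpr ⟨natDegree_q₁_le k₀ h, Dop_q₁ k₀ hm hk⟩

theorem q₂_mem_dopKernel (hm : Odd m) (hk : ((m : ℂ) - 1 - 2 * a) / 4 = k₀) (h : 2 * k₀ ≤ m) :
    q₂ m k₀ ∈ dopKernel m a :=
  reflect_q₁ k₀ h ▸ reflect_mem_dopKernel (q₁_mem_dopKernel hm hk h)

theorem dopKernel_le_span (hm : Odd m) (hk : ((m : ℂ) - 1 - 2 * a) / 4 = k₀) (h : 2 * k₀ ≤ m) :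
    dopKernel m a ≤ Submodule.span ℂ {q₁ m k₀, q₂ m k₀} := by
  intro q hq
  set r := q - q.coeff 0 • q₁ m k₀ - q.coeff m • q₂ m k₀ with hr_def
  have hr : r ∈ dopKernel m a := sub_mem (sub_mem hq (Submodule.smul_mem _ _
    (q₁_mem_dopKernel hm hk h))) (Submodule.smul_mem _ _ (q₂_mem_dopKernel hm hk h))
  have heven {p : ℂ[X]} (hp : p ∈ dopKernel m a) (h₀ : p.coeff 0 = 0) (j : ℕ) :
      p.coeff (0 + 2 * j) = 0 :=
    coeff_add_two_mul_eq_zero_of_mem_dopKernel hp h₀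
      (fun j _ => lowerCoeff_ne_zero_of_even hm hk ⟨j + 1, by ring⟩ (by omega)) j
  have hr₀ : r.coeff 0 = 0 := by
    simp [r, coeff_q₁_zero, coeff_q₂_zero k₀ hm h]
  have hrm : (reflect m r).coeff 0 = 0 := by
    simp [r, coeff_reflect, coeff_q₁_of_odd k₀ hm, coeff_q₂_self k₀ h]
  have hr0 : r = 0 := eq_zero_of_coeff_reflect_eq_zero hm (mem_dopKernel.mp hr).1 zero_le_one
    (heven hr hr₀) (heven (reflect_mem_dopKernel hr) hrm)
  rw [hr_def, sub_sub, sub_eq_zero] at hr0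
  exact Submodule.mem_span_pair.mpr ⟨_, _, hr0.symm⟩

theorem dopKernel_eq_span (hm : Odd m) (hk : ((m : ℂ) - 1 - 2 * a) / 4 = k₀) (h : 2 * k₀ ≤ m) :
    dopKernel m a = Submodule.span ℂ {q₁ m k₀, q₂ m k₀} :=
  le_antisymm (dopKernel_le_span hm hk h) <| Submodule.span_le.mpr <|
    Set.pair_subset (q₁_mem_dopKernel hm hk h) (q₂_mem_dopKernel hm hk h)

theorem linearIndependent_q₁_q₂ (hm : Odd m) (h : 2 * k₀ ≤ m) :
    LinearIndependent ℂ ![q₁ m k₀, q₂ m k₀] := by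
  rw [LinearIndependent.pair_iff]
  intro s t hst
  have h₀ := congrArg (coeff · 0) hst
  have hm' := congrArg (coeff · m) hst
  simp only [coeff_add, coeff_smul, smul_eq_mul, coeff_zero, coeff_q₁_zero, coeff_q₂_zero k₀ hm h,
    coeff_q₁_of_odd k₀ hm, coeff_q₂_self k₀ h] at h₀ hm'
  exact ⟨by simpa using h₀, by simpa using hm'⟩

end Classification

theorem statement18_general (m : ℕ) (hm : Odd m) (a : ℂ) :
    ((∃ q : ℂ[X], q.degree ≤ (m : WithBot ℕ) ∧ q ≠ 0 ∧ Dop m a q = 0) ↔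
      ∃ k₀ : ℕ, ((m : ℂ) - 1 - 2 * a) / 4 = (k₀ : ℂ) ∧ 2 * k₀ ≤ m - 1) ∧
    (∀ k₀ : ℕ, ((m : ℂ) - 1 - 2 * a) / 4 = (k₀ : ℂ) → 2 * k₀ ≤ m - 1 →
      {q : ℂ[X] | q.degree ≤ (m : WithBot ℕ) ∧ Dop m a q = 0} =
        (Submodule.span ℂ {q₁ m k₀, q₂ m k₀} : Set ℂ[X]) ∧
      LinearIndependent ℂ ![q₁ m k₀, q₂ m k₀]) := by
  simp only [← coe_dopKernel, SetLike.coe_set_eq]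
  refine ⟨⟨?_, ?_⟩, fun k₀ hk h => ⟨dopKernel_eq_span hm hk (by omega),
    linearIndependent_q₁_q₂ hm (by omega)⟩⟩
  · rintro ⟨q, hdeg, hq0, hD⟩
    by_contra hk
    exact hq0 <| eq_zero_of_mem_dopKernel hm hk <|
      mem_dopKernel.mpr ⟨natDegree_le_iff_degree_le.mpr hdeg, hD⟩
  · rintro ⟨k₀, hk, h⟩
    obtain ⟨hdeg, hD⟩ := mem_dopKernel.mp (q₁_mem_dopKernel hm hk (by omega))
    refine ⟨q₁ m k₀, natDegree_le_iff_degree_le.mp hdeg, fun h0 => ?_, hD⟩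
    simpa [h0] using coeff_q₁_zero (m := m) k₀

/-- Let `m` be an odd positive integer, `a ∈ ℂ`, and
`k₀ = (m-1-2a)/4`. The operator `D` has a nonzero kernel on the space of polynomials
of degree at most `m` if and only if `k₀ ∈ ℕ` and `2k₀ ≤ m-1`; in that case the
kernel is two-dimensional, spanned by the polynomials `q₁` and `q₂`. -/
theorem statement18 (m : ℕ) (hm : Odd m) (hm0 : 0 < m) (a : ℂ) :
    ((∃ q : ℂ[X], q.degree ≤ (m : WithBot ℕ) ∧ q ≠ 0 ∧ Dop m a q = 0) ↔
      ∃ k₀ : ℕ, ((m : ℂ) - 1 - 2 * a) / 4 = (k₀ : ℂ) ∧ 2 * k₀ ≤ m - 1) ∧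
    (∀ k₀ : ℕ, ((m : ℂ) - 1 - 2 * a) / 4 = (k₀ : ℂ) → 2 * k₀ ≤ m - 1 →
      {q : ℂ[X] | q.degree ≤ (m : WithBot ℕ) ∧ Dop m a q = 0} =
        (Submodule.span ℂ {q₁ m k₀, q₂ m k₀} : Set ℂ[X]) ∧
      LinearIndependent ℂ ![q₁ m k₀, q₂ m k₀]) :=
  statement18_general m hm a
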